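/- Superdimension reduction for gl(m|m+k): for every partition λ in the (m, m+k)-hook, s_λ(1,...,1 | −1,...,−1) with m ones and m+k minus-ones equals (−1)^{|λ|} times the dimension of the gl(k) irrep with highest weight λ' (the conjugate partition) if λ₁ ≤ k, and equals 0 if λ₁ > k. -/

import Mathlib

/-- A partition: weakly decreasing, finitely supported sequence of naturals (0-indexed parts). -/
structure Ptn where
  f : ℕ → ℕ
  mono : ∀ ⦃i j : ℕ⦄, i ≤ j → f j ≤ f i
  supp : ∃ N, ∀ i, N ≤ i → f i = 0

namespace Ptn

/-- The weight |λ| = sum of the parts. -/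
noncomputable def wt (l : Ptn) : ℕ := ∑ᶠ i, l.f i

/-- The length ℓ(λ) = number of nonzero parts. -/
noncomputable def len (l : Ptn) : ℕ := Set.ncard {i | l.f i ≠ 0}

/-- λ ∈ B: every part appears an even number of times, i.e. λ_{2i-1} = λ_{2i} (1-indexed). -/
def inB (l : Ptn) : Prop := ∀ i, l.f (2 * i) = l.f (2 * i + 1)

/-- Containment of Young diagrams. -/
def sub (m l : Ptn) : Prop := ∀ i, m.f i ≤ l.f i

/-- For μ ⊆ λ, the skew diagram λ − μ is a horizontal strip iff λ_{i+1} ≤ μ_i for all i. -/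
def hstrip (m l : Ptn) : Prop := ∀ i, l.f (i + 1) ≤ m.f i

/-- λ ∈ B_r: λ is obtained from some μ ∈ B by adjoining a horizontal strip of length r. -/
def inBr (r : ℕ) (l : Ptn) : Prop :=
  ∃ m : Ptn, inB m ∧ sub m l ∧ hstrip m l ∧ l.wt = m.wt + r

/-- The conjugate partition: λ'_{i+1} = #{j : λ_j ≥ i+1} (0-indexed). -/
noncomputable def conj (l : Ptn) (i : ℕ) : ℕ := Set.ncard {j | i + 1 ≤ l.f j}

end Ptn

/-- h_k(1^m | (-1)^n): the specialization of the supersymmetric complete homogeneous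
function h_k(x|y) = Σ_{a+b=k} h_a(x) e_b(y) at x_i = 1 (m variables), y_j = -1 (n variables);
h_a(1^m) = C(a+m-1, a) and e_b((-1)^n) = (-1)^b C(n,b).  Zero for negative k. -/
noncomputable def hval (m n : ℕ) (k : ℤ) : ℤ :=
  if k < 0 then 0 else
    ∑ b ∈ Finset.range (k.toNat + 1),
      ((k.toNat - b + m - 1).choose (k.toNat - b) : ℤ) * (-1) ^ b * (n.choose b : ℤ)

/-- Jacobi–Trudi determinant of size N for the parts f: the specialization s_λ(1^m | (-1)^n)
of the supersymmetric Schur function, valid whenever N ≥ ℓ(λ). -/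
noncomputable def sdimF (m n N : ℕ) (f : ℕ → ℕ) : ℤ :=
  Matrix.det (Matrix.of fun i j : Fin N => hval m n ((f i.1 : ℤ) - (i.1 : ℤ) + (j.1 : ℤ)))

/-- The superdimension sdim V^λ_{gl(m|n)} = s_λ(1,…,1 | −1,…,−1). -/
noncomputable def sdim (m n : ℕ) (l : Ptn) : ℤ := sdimF m n l.len l.f

/-- dim V^λ_{gl(k)} = s_λ(1,…,1) (k ones). -/
noncomputable def dimGL (k : ℕ) (l : Ptn) : ℤ := sdimF k 0 l.len l.f

/-!
At `x = (1, …, 1)`, `y = (-1, …, -1)` the generating series `∑ h_r(x|y) t^r` is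
`(1 - t)^n / (1 - t)^m`, which for `n = m + k` is `(1 - t)^k`, the generating series of
`(-1)^r e_r(1^k)`. So the superdimension is the Jacobi–Trudi determinant
`det [coeff_{λ_i - i + j} (1 - t)^k]`. If `λ₁ > k` its first row vanishes. Otherwise the dual
Jacobi–Trudi identity, valid for any `f g = 1`, turns it into `(-1)^{|λ|}` times the determinant
`det [coeff_{λ'_i - i + j} (1 - t)^{-k}] = s_{λ'}(1^k)`. The dual identity is Jacobi's
complementary-minor identity for the mutually inverse Toeplitz matrices of `f` and `g`, with rows
and columns split according to `λ` and `λ'` (Macdonald I.(1.7)); the sign `(-1)^{|λ|}` of that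
splitting permutation comes from removing the boxes of `λ` one at a time, each removal composing
it with a transposition.
-/

open Finset PowerSeries

namespace PowerSeries

variable {R : Type*} [CommRing R]

noncomputable def coeffInt (f : R⟦X⟧) (r : ℤ) : R := if r < 0 then 0 else coeff r.toNat f

@[simp]
lemma coeffInt_natCast (f : R⟦X⟧) (n : ℕ) : coeffInt f n = coeff n f := by
  simp [coeffInt]

lemma coeffInt_of_neg (f : R⟦X⟧) {r : ℤ} (hr : r < 0) : coeffInt f r = 0 := if_pos hr

lemma coeff_one_sub_X_pow (n b : ℕ) :
    coeff b ((1 - X : R⟦X⟧) ^ n) = (-1) ^ b * (n.choose b : R) := by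
  have h : (1 - X : R⟦X⟧) ^ n =
      rescale (-1) (((1 + Polynomial.X) ^ n : Polynomial R) : R⟦X⟧) := by
    simp [sub_eq_add_neg]
  rw [h, coeff_rescale, Polynomial.coeff_coe, Polynomial.coeff_one_add_X_pow]

lemma coeff_invOneSubPow (m a : ℕ) :
    coeff a (invOneSubPow R m).val = ((a + m - 1).choose a : R) := by
  cases m with
  | zero => cases a <;> simp [invOneSubPow_zero, coeff_one]
  | succ m =>
    rw [invOneSubPow_val_succ_eq_mk_add_choose, coeff_mk, show a + (m + 1) - 1 = a + m by omega,
      add_comm m, Nat.choose_symm_add]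

noncomputable def upperToeplitz (M : ℕ) (f : R⟦X⟧) : Matrix (Fin M) (Fin M) R :=
  Matrix.of fun x y => coeffInt f ((y : ℤ) - x)

lemma upperToeplitz_mul (M : ℕ) (f g : R⟦X⟧) :
    upperToeplitz M f * upperToeplitz M g = upperToeplitz M (f * g) := by
  ext x z
  simp only [upperToeplitz, Matrix.mul_apply, Matrix.of_apply]
  rw [Fin.sum_univ_eq_sum_range
    (fun y : ℕ => coeffInt f ((y : ℤ) - x) * coeffInt g ((z : ℤ) - y))]
  have hvanish : ∀ y : ℕ, y < x ∨ (z : ℕ) < y →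
      coeffInt f ((y : ℤ) - x) * coeffInt g ((z : ℤ) - y) = 0 := by
    rintro y (h | h)
    · rw [coeffInt_of_neg f (by omega), zero_mul]
    · rw [coeffInt_of_neg g (by omega), mul_zero]
  rcases lt_or_ge (z : ℕ) x with hzx | hxz
  · rw [coeffInt_of_neg _ (by omega)]
    exact sum_eq_zero fun y _ => hvanish y (by omega)
  obtain ⟨s, hs⟩ : ∃ s, (z : ℕ) = x + s := ⟨z - x, by omega⟩
  have hsupp : ∀ y ∈ range M, y ∉ Ico (x : ℕ) (z + 1) →
      coeffInt f ((y : ℤ) - x) * coeffInt g ((z : ℤ) - y) = 0 :=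
    fun y _ hy => hvanish y (by simp only [mem_Ico, not_and_or, not_le, not_lt] at hy; omega)
  rw [← sum_subset (fun y hy => by simp at hy ⊢; omega) hsupp, sum_Ico_eq_sum_range,
    show (z : ℤ) - x = s by omega, coeffInt_natCast, coeff_mul,
    Nat.sum_antidiagonal_eq_sum_range_succ (fun i j => coeff i f * coeff j g),
    show (z : ℕ) + 1 - x = s + 1 by omega]
  refine sum_congr rfl fun i hi => ?_
  rw [mem_range] at hi
  rw [show ((x + i : ℕ) : ℤ) - x = i by push_cast; ring,
    show (z : ℤ) - (x + i : ℕ) = (s - i : ℕ) by omega, coeffInt_natCast, coeffInt_natCast]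

lemma upperToeplitz_one (M : ℕ) : upperToeplitz M (1 : R⟦X⟧) = 1 := by
  ext x y
  rw [Matrix.one_apply, upperToeplitz, Matrix.of_apply, coeffInt, coeff_one]
  split_ifs <;> simp_all [Fin.ext_iff]
  omega

lemma det_upperToeplitz (M : ℕ) (f : R⟦X⟧) :
    (upperToeplitz M f).det = constantCoeff f ^ M := by
  rw [Matrix.det_of_isUpperTriangular]
  · simp [upperToeplitz, coeffInt]
  · intro i j hij
    exact coeffInt_of_neg _ (by simpa using hij)

noncomputable def jacobiTrudi (f : R⟦X⟧) (N : ℕ) (parts : ℕ → ℕ) :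
    Matrix (Fin N) (Fin N) R :=
  Matrix.of fun i j => coeffInt f ((parts i : ℤ) - i + j)

lemma det_jacobiTrudi_eq_zero {g : R⟦X⟧} {d N : ℕ} {parts : ℕ → ℕ}
    (hg : ∀ b, d < b → coeff b g = 0) (hN : 0 < N) (h₀ : d < parts 0) :
    (jacobiTrudi g N parts).det = 0 :=
  Matrix.det_eq_zero_of_row_eq_zero ⟨0, hN⟩ fun j => by
    rw [jacobiTrudi, Matrix.of_apply, show (parts 0 : ℤ) - (0 : ℕ) + j = (parts 0 + j : ℕ) by
      push_cast; ring, coeffInt_natCast]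
    exact hg _ (by omega)

lemma coeff_one_sub_X_pow_of_lt {n b : ℕ} (h : n < b) : coeff b ((1 - X : R⟦X⟧) ^ n) = 0 := by
  rw [coeff_one_sub_X_pow, Nat.choose_eq_zero_of_lt h, Nat.cast_zero, mul_zero]

lemma constantCoeff_invOneSubPow (m : ℕ) : constantCoeff (invOneSubPow R m).val = 1 := by
  simpa using coeff_invOneSubPow (R := R) m 0

end PowerSeries

lemma hval_eq_coeffInt (m n : ℕ) :
    hval m n = coeffInt ((1 - X : ℤ⟦X⟧) ^ n * (invOneSubPow ℤ m).val) := by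
  funext r
  rcases lt_or_ge r 0 with hr | hr
  · rw [hval, if_pos hr, coeffInt_of_neg _ hr]
  · lift r to ℕ using hr
    rw [hval, if_neg (by omega), coeffInt_natCast, coeff_mul,
      Nat.sum_antidiagonal_eq_sum_range_succ (fun b a => coeff b _ * coeff a _)]
    refine sum_congr rfl fun b _ => ?_
    rw [coeff_one_sub_X_pow, coeff_invOneSubPow, Int.toNat_natCast]
    ring

lemma sdimF_eq_det_jacobiTrudi (m n N : ℕ) (f : ℕ → ℕ) :
    sdimF m n N f =
      (jacobiTrudi ((1 - X : ℤ⟦X⟧) ^ n * (invOneSubPow ℤ m).val) N f).det := by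
  rw [sdimF, hval_eq_coeffInt]
  rfl

/-- Jacobi's complementary-minor identity, for `B = A⁻¹`. -/
theorem Matrix.det_mul_det_toBlocks₁₁_of_mul_eq_one {m n R : Type*} [Fintype m] [Fintype n]
    [DecidableEq m] [DecidableEq n] [CommRing R] {A B : Matrix (m ⊕ n) (m ⊕ n) R}
    (h : A * B = 1) : A.det * B.toBlocks₁₁.det = A.toBlocks₂₂.det := by
  rw [← fromBlocks_toBlocks A, ← fromBlocks_toBlocks B, fromBlocks_multiply, ← fromBlocks_one,
    fromBlocks_inj] at h
  have key : A * fromBlocks B.toBlocks₁₁ 0 B.toBlocks₂₁ 1 =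
      fromBlocks 1 A.toBlocks₁₂ 0 A.toBlocks₂₂ := by
    conv_lhs => rw [← fromBlocks_toBlocks A]
    simp [fromBlocks_multiply, h.1, h.2.2.1]
  simpa [det_fromBlocks_zero₁₂, det_fromBlocks_zero₂₁] using congrArg det key

def conjOn (N : ℕ) (f : ℕ → ℕ) (i : ℕ) : ℕ := #{j ∈ range N | i < f j}

/-- The diagram of `f` inside the `N × q` box is cut off by a lattice path of `N + q` unit steps
from the bottom-left to the top-right corner; `betaPos` gives the positions along it of the `N`
vertical steps (rows, counted from the bottom) and of the `q` horizontal steps (columns). -/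
def betaPos (N q : ℕ) (f : ℕ → ℕ) : Fin N ⊕ Fin q → ℕ :=
  Sum.elim (fun b => f (N - 1 - b) + b) (fun i => N + i - conjOn N f i)

lemma conjOn_le (N : ℕ) (f : ℕ → ℕ) (i : ℕ) : conjOn N f i ≤ N :=
  (card_filter_le _ _).trans (card_range N).le

lemma conjOn_eq_of_forall_iff {N t i : ℕ} {f : ℕ → ℕ} (ht : t ≤ N)
    (h : ∀ j < N, i < f j ↔ j < t) : conjOn N f i = t := by
  rw [conjOn, show {j ∈ range N | i < f j} = range t from ?_, card_range]
  ext j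
  simp only [mem_filter, mem_range]
  exact ⟨fun hj => (h j hj.1).1 hj.2, fun hj => ⟨by omega, (h j (by omega)).2 hj⟩⟩

section RemoveBox

variable {N r : ℕ} {f : ℕ → ℕ}

lemma exists_lastRow (hanti : Antitone f) (hN : ∀ j, N ≤ j → f j = 0)
    (hpos : 0 < ∑ i ∈ range N, f i) : ∃ r < N, f r ≠ 0 ∧ ∀ j, r < j → f j = 0 := by
  have hex : ∃ L, f L = 0 := ⟨N, hN N le_rfl⟩
  have hL : Nat.find hex ≠ 0 := by
    intro h0
    have hf0 : f 0 = 0 := by simpa [h0] using Nat.find_spec hex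
    have : ∑ i ∈ range N, f i = 0 :=
      sum_eq_zero fun i _ => Nat.eq_zero_of_le_zero (hf0 ▸ hanti (Nat.zero_le i))
    omega
  refine ⟨Nat.find hex - 1, ?_, Nat.find_min hex (by omega), fun j hj => ?_⟩
  · have := Nat.find_min' hex (hN N le_rfl)
    omega
  · have := hanti (by omega : Nat.find hex ≤ j)
    rw [Nat.find_spec hex] at this
    omega

lemma antitone_update_lastRow (hanti : Antitone f) (hlast : ∀ j, r < j → f j = 0) :
    Antitone (Function.update f r (f r - 1)) := by
  intro i j hij
  simp only [Function.update_apply]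
  split_ifs with hj hi hi
  · omega
  · have := hanti (hj ▸ hij : i ≤ r)
    omega
  · rw [hlast j (by omega)]
    omega
  · exact hanti hij

lemma conjOn_lastRow (hanti : Antitone f) (hr : f r ≠ 0) (hlast : ∀ j, r < j → f j = 0)
    (hrN : r < N) : conjOn N f (f r - 1) = r + 1 :=
  conjOn_eq_of_forall_iff (by omega) fun j _ => by
    constructor
    · intro h
      by_contra hj
      rw [hlast j (by omega)] at h
      omega
    · intro hj
      have := hanti (by omega : j ≤ r)
      omega

lemma conjOn_update_lastRow (hanti : Antitone f) (hr : f r ≠ 0)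
    (hlast : ∀ j, r < j → f j = 0) (hrN : r < N) :
    conjOn N (Function.update f r (f r - 1)) (f r - 1) = r :=
  conjOn_eq_of_forall_iff (by omega) fun j _ => by
    simp only [Function.update_apply]
    split_ifs with hj
    · omega
    constructor
    · intro h
      by_contra hjr
      rw [hlast j (by omega)] at h
      omega
    · intro hj
      have := hanti (by omega : j ≤ r)
      omega

lemma conjOn_update_lastRow_of_ne {i : ℕ} (hi : i ≠ f r - 1) :
    conjOn N (Function.update f r (f r - 1)) i = conjOn N f i := by
  unfold conjOn
  congr 1
  refine filter_congr fun j _ => ?_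
  simp only [Function.update_apply]
  split_ifs with hj
  · subst hj
    omega
  · rfl

lemma betaPos_update_lastRow {q : ℕ} (hanti : Antitone f) (hr : f r ≠ 0)
    (hlast : ∀ j, r < j → f j = 0) (hrN : r < N)
    {b₀ : Fin N} (hb₀ : (b₀ : ℕ) = N - 1 - r) {i₀ : Fin q} (hi₀ : (i₀ : ℕ) = f r - 1)
    (x : Fin N ⊕ Fin q) :
    betaPos N q f x =
      betaPos N q (Function.update f r (f r - 1)) (Equiv.swap (.inl b₀) (.inr i₀) x) := by
  rcases x with b | i
  · by_cases hb : b = b₀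
    · rw [hb, Equiv.swap_apply_left]
      simp only [betaPos, Sum.elim_inl, Sum.elim_inr, hi₀,
        conjOn_update_lastRow hanti hr hlast hrN, show N - 1 - (b₀ : ℕ) = r by omega]
      omega
    · rw [Equiv.swap_apply_of_ne_of_ne (by simpa using hb) Sum.inl_ne_inr]
      simp only [betaPos, Sum.elim_inl]
      rw [Function.update_of_ne (by omega)]
  · by_cases hi : i = i₀
    · rw [hi, Equiv.swap_apply_right]
      simp only [betaPos, Sum.elim_inl, Sum.elim_inr, hi₀,
        conjOn_lastRow hanti hr hlast hrN, show N - 1 - (b₀ : ℕ) = r by omega,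
        Function.update_self]
      omega
    · rw [Equiv.swap_apply_of_ne_of_ne Sum.inr_ne_inl (by simpa using hi)]
      simp only [betaPos, Sum.elim_inr]
      rw [conjOn_update_lastRow_of_ne (by omega)]

end RemoveBox

theorem exists_perm_betaPos {N q : ℕ} {f : ℕ → ℕ} (hanti : Antitone f)
    (hN : ∀ j, N ≤ j → f j = 0) (hq : ∀ j, f j ≤ q) :
    ∃ σ : Equiv.Perm (Fin (N + q)), (∀ x, (σ (finSumFinEquiv x) : ℕ) = betaPos N q f x) ∧
      Equiv.Perm.sign σ = (-1) ^ ∑ i ∈ range N, f i := by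
  obtain ⟨n, hn⟩ : ∃ n, ∑ i ∈ range N, f i = n := ⟨_, rfl⟩
  induction n generalizing f with
  | zero =>
    have hf : ∀ j, f j = 0 := fun j =>
      (lt_or_ge j N).elim (fun hj => sum_eq_zero_iff.mp hn j (mem_range.mpr hj)) (hN j)
    have hconj : ∀ i, conjOn N f i = 0 := fun i => by simp [conjOn, hf]
    refine ⟨1, fun x => ?_, by rw [hn, map_one, pow_zero]⟩
    rcases x with b | i <;> simp [betaPos, hf, hconj]
  | succ n ih =>
    obtain ⟨r, hrN, hr, hlast⟩ := exists_lastRow hanti hN (by omega)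
    have hn' : ∑ i ∈ range N, Function.update f r (f r - 1) i = n := by
      have := add_sum_erase _ f (mem_range.mpr hrN)
      rw [sum_update_of_mem (mem_range.mpr hrN), sdiff_singleton_eq_erase]
      omega
    obtain ⟨σ, hσ, hsign⟩ := ih (antitone_update_lastRow hanti hlast)
      (fun j hj => by rw [Function.update_of_ne (by omega), hN j hj])
      (fun j => (Function.update_apply f r _ j).trans_le (by split_ifs <;> grind)) hn'
    set b₀ : Fin N := ⟨N - 1 - r, by omega⟩
    set i₀ : Fin q := ⟨f r - 1, by have := hq r; omega⟩
    refine ⟨σ * Equiv.swap (finSumFinEquiv (.inl b₀)) (finSumFinEquiv (.inr i₀)),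
      fun x => ?_, ?_⟩
    · rw [Equiv.Perm.mul_apply, finSumFinEquiv.injective.swap_apply, hσ,
        betaPos_update_lastRow hanti hr hlast hrN (b₀ := b₀) (i₀ := i₀) rfl rfl]
    · rw [map_mul, hsign, hn', hn, pow_succ,
        Equiv.Perm.sign_swap (by simp [Fin.ext_iff, b₀, i₀]; omega)]

namespace PowerSeries

variable {R : Type*} [CommRing R]

theorem det_jacobiTrudi_eq_det_jacobiTrudi_conjOn {f g : R⟦X⟧} (hfg : f * g = 1)
    (hf : constantCoeff f = 1) {N q : ℕ} {parts : ℕ → ℕ} (hanti : Antitone parts)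
    (hN : ∀ j, N ≤ j → parts j = 0) (hq : ∀ j, parts j ≤ q) :
    (jacobiTrudi g N parts).det =
      (-1) ^ (∑ i ∈ range N, parts i) * (jacobiTrudi f q (conjOn N parts)).det := by
  obtain ⟨σ, hσ, hsign⟩ := exists_perm_betaPos hanti hN hq
  set u : Fin N ⊕ Fin q ≃ Fin (N + q) := finSumFinEquiv
  set A := (upperToeplitz (N + q) f).submatrix (u.trans σ) u
  set B := (upperToeplitz (N + q) g).submatrix u (u.trans σ)
  have hAB : A * B = 1 := by
    rw [Matrix.submatrix_mul_equiv, upperToeplitz_mul, hfg, upperToeplitz_one,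
      Matrix.submatrix_one_equiv]
  have hrow : ∀ b, (σ (u (.inl b)) : ℕ) = parts (N - 1 - b) + b := fun b => hσ _
  have hcol : ∀ i, (σ (u (.inr i)) : ℕ) = N + i - conjOn N parts i := fun i => hσ _
  have hA : A.det = Equiv.Perm.sign σ := by
    rw [show A = ((upperToeplitz (N + q) f).submatrix σ id).submatrix u u from rfl,
      Matrix.det_submatrix_equiv_self, Matrix.det_permute, det_upperToeplitz, hf, one_pow, mul_one]
  have hB : B.toBlocks₁₁.det = (jacobiTrudi g N parts).det := by
    rw [show B.toBlocks₁₁ =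
        (jacobiTrudi g N parts).transpose.submatrix Fin.revPerm Fin.revPerm from ?_,
      Matrix.det_submatrix_equiv_self, Matrix.det_transpose]
    ext a b
    simp only [B, Matrix.toBlocks₁₁, Matrix.submatrix_apply, Matrix.transpose_apply,
      Equiv.trans_apply, upperToeplitz, jacobiTrudi, Matrix.of_apply, hrow, Fin.revPerm_apply]
    simp only [u, finSumFinEquiv_apply_left, Fin.val_rev, Fin.val_castAdd]
    rw [show N - ((b : ℕ) + 1) = N - 1 - b by omega]
    congr 1
    omega
  have hA₂₂ : A.toBlocks₂₂ = jacobiTrudi f q (conjOn N parts) := by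
    ext i j
    simp only [A, Matrix.toBlocks₂₂, Matrix.submatrix_apply, Equiv.trans_apply, upperToeplitz,
      jacobiTrudi, Matrix.of_apply, hcol]
    simp only [u, finSumFinEquiv_apply_right, Fin.val_natAdd]
    congr 1
    have := conjOn_le N parts i
    omega
  have key := Matrix.det_mul_det_toBlocks₁₁_of_mul_eq_one hAB
  rw [hA, hB, hA₂₂, hsign] at key
  rw [← key, ← mul_assoc]
  push_cast
  rw [← mul_pow, neg_one_mul, neg_neg, one_pow, one_mul]

end PowerSeries

namespace Ptn

lemma antitone (l : Ptn) : Antitone l.f := fun _ _ h => l.mono h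

lemma setOf_f_ne_zero_eq_Iio (l : Ptn) : {i | l.f i ≠ 0} = Set.Iio l.len := by
  obtain ⟨N, hN⟩ := l.supp
  have hex : ∃ L, l.f L = 0 := ⟨N, hN N le_rfl⟩
  have h : {i | l.f i ≠ 0} = Set.Iio (Nat.find hex) := by
    ext i
    refine ⟨fun hi => ?_, Nat.find_min hex⟩
    by_contra hle
    have := l.antitone (not_lt.mp hle)
    rw [Nat.find_spec hex] at this
    exact hi (Nat.eq_zero_of_le_zero this)
  rw [len, h, Set.ncard_Iio_nat]

lemma f_ne_zero_iff_lt_len (l : Ptn) {i : ℕ} : l.f i ≠ 0 ↔ i < l.len := by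
  rw [← Set.mem_Iio, ← setOf_f_ne_zero_eq_Iio]
  rfl

lemma f_eq_zero_of_len_le (l : Ptn) {i : ℕ} (h : l.len ≤ i) : l.f i = 0 := by
  by_contra hi
  exact absurd (l.f_ne_zero_iff_lt_len.mp hi) (not_lt.mpr h)

lemma wt_eq_sum_range (l : Ptn) : l.wt = ∑ i ∈ range l.len, l.f i :=
  finsum_eq_sum_of_support_subset _ fun _ hi => by simpa using l.f_ne_zero_iff_lt_len.mp hi

lemma conj_eq_conjOn (l : Ptn) : l.conj = conjOn l.len l.f := by
  funext i
  rw [conj, conjOn, ← Set.ncard_coe_finset]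
  congr
  ext j
  simpa using fun h => l.f_ne_zero_iff_lt_len.mp (by omega)

end Ptn

theorem sdim_gl_mmk_general (m k : ℕ) (l : Ptn) :
    sdim m (m + k) l =
      if l.f 0 ≤ k then (-1) ^ l.wt * sdimF k 0 (l.f 0) l.conj else 0 := by
  have hsdim : sdim m (m + k) l = (jacobiTrudi ((1 - X : ℤ⟦X⟧) ^ k) l.len l.f).det := by
    rw [sdim, sdimF_eq_det_jacobiTrudi, add_comm m,
      one_sub_pow_add_mul_invOneSubPow_val_eq_one_sub_pow]
  split_ifs with hk
  · rw [hsdim, sdimF_eq_det_jacobiTrudi, pow_zero, one_mul, l.conj_eq_conjOn, l.wt_eq_sum_range]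
    refine det_jacobiTrudi_eq_det_jacobiTrudi_conjOn ?_ (constantCoeff_invOneSubPow k)
      l.antitone (fun _ => l.f_eq_zero_of_len_le) (fun j => l.antitone (Nat.zero_le j))
    rw [← invOneSubPow_inv_eq_one_sub_pow, Units.val_inv]
  · rw [hsdim]
    exact det_jacobiTrudi_eq_zero (fun _ => coeff_one_sub_X_pow_of_lt)
      (l.f_ne_zero_iff_lt_len.mp (by omega)) (not_le.mp hk)

/-- for λ in the (m,m+k)-hook, s_λ(1^m | (−1)^{m+k}) equals
(−1)^{|λ|} dim V^{λ'}_{gl(k)} when λ₁ ≤ k, and 0 when λ₁ > k.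
(Here ℓ(λ') = λ₁, so dim V^{λ'}_{gl(k)} = s_{λ'}(1^k) is the Jacobi–Trudi determinant of
size λ₁ for the conjugate parts.) -/
theorem sdim_gl_mmk (m k : ℕ) (l : Ptn) (hhook : l.f m ≤ m + k) :
    sdim m (m + k) l =
      if l.f 0 ≤ k then (-1) ^ l.wt * sdimF k 0 (l.f 0) l.conj else 0 :=
  sdim_gl_mmk_general m k l
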